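/- There is no right triangle with rational side lengths and area equal to 1. Equivalently, there are no positive rationals a, b, c with a²+b²=c² and a·b/2 = 1. -/

import Mathlib

set_option maxHeartbeats 1000000

/-- Descent step used twice: a solution `X ^ 2 = (p²)² + (2q²)²` with the right coprimality
yields a smaller solution to `e ^ 4 = f ^ 4 + z ^ 2`. -/
private lemma step2 (X p q : ℤ) (hX : 0 < X) (hq : q ≠ 0) (hodd : p % 2 = 1)
    (hgcd : Int.gcd (p ^ 2) (2 * q ^ 2) = 1)
    (heq : X ^ 2 = (p ^ 2) ^ 2 + (2 * q ^ 2) ^ 2)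
    (IH : ∀ m y z : ℤ, m.natAbs < X.natAbs → m ^ 4 = y ^ 4 + z ^ 2 → y = 0 ∨ z = 0) :
    False := by
  have hp : p ≠ 0 := by intro h; rw [h] at hodd; norm_num at hodd
  have htriple : PythagoreanTriple (p ^ 2) (2 * q ^ 2) X := by
    unfold PythagoreanTriple; linear_combination -heq
  have hp2odd : (p ^ 2) % 2 = 1 := by
    have := Int.odd_iff.mpr hodd
    exact Int.odd_iff.mp (this.pow)
  obtain ⟨m, n, h1, h2, h3, hmn, _, hm0⟩ :=
    htriple.coprime_classification' hgcd hp2odd hX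
  have hq2 : q ^ 2 = m * n := by linarith
  have hmne : m ≠ 0 := by
    intro h; rw [h] at hq2; simp at hq2; exact hq (by nlinarith [sq_nonneg q])
  have hnne : n ≠ 0 := by
    intro h; rw [h] at hq2; simp at hq2; exact hq (by nlinarith [sq_nonneg q])
  have hmpos : 0 < m := lt_of_le_of_ne hm0 (Ne.symm hmne)
  have hnpos : 0 < n := by nlinarith [sq_nonneg q, sq_pos_of_ne_zero hq]
  have hco : IsCoprime m n := Int.isCoprime_iff_gcd_eq_one.mpr hmn
  obtain ⟨e, he⟩ := Int.sq_of_isCoprime hco hq2.symm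
  have he : m = e ^ 2 := by
    rcases he with h | h
    · exact h
    · exfalso; nlinarith [sq_nonneg e]
  obtain ⟨f, hf⟩ := Int.sq_of_isCoprime hco.symm (by linear_combination -hq2 : n * m = q ^ 2)
  have hf : n = f ^ 2 := by
    rcases hf with h | h
    · exact h
    · exfalso; nlinarith [sq_nonneg f]
  have hfe : e ^ 4 = f ^ 4 + p ^ 2 := by
    have : p ^ 2 = m ^ 2 - n ^ 2 := h1
    rw [he, hf] at this; linarith
  have hene : e ≠ 0 := by intro h; rw [h] at he; simp at he; exact hmne he
  have hfne : f ≠ 0 := by intro h; rw [h] at hf; simp at hf; exact hnne hf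
  have hsmall : e.natAbs < X.natAbs := by
    have habs : (e.natAbs : ℤ) = |e| := (Int.abs_eq_natAbs e).symm
    have h1' : (e.natAbs : ℤ) ≤ e ^ 2 := by
      rw [habs]
      nlinarith [Int.one_le_abs (by exact hene : e ≠ 0), sq_abs e]
    have h2' : (X.natAbs : ℤ) = X := Int.natAbs_of_nonneg hX.le
    have hm1 : 1 ≤ m := hmpos
    have hmm : m ≤ m ^ 2 := by nlinarith [hm1]
    have hn2 : 0 < n ^ 2 := by positivity
    have : (e.natAbs : ℤ) < (X.natAbs : ℤ) := by
      rw [h2', h3]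
      have := h1'
      rw [← he] at this
      linarith
    exact_mod_cast this
  rcases IH e f p hsmall hfe with h | h
  · exact hfne h
  · exact hp h

private theorem quartic_diff : ∀ x y z : ℤ, x ^ 4 = y ^ 4 + z ^ 2 → y = 0 ∨ z = 0 := by
  have main : ∀ N : ℕ, ∀ x y z : ℤ, x.natAbs ≤ N → x ^ 4 = y ^ 4 + z ^ 2 → y = 0 ∨ z = 0 := by
    intro N
    induction N with
    | zero =>
      intro x y z hx h
      have hx0 : x = 0 := Int.natAbs_eq_zero.mp (Nat.le_zero.mp hx)
      subst hx0
      left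
      have hy4 : y ^ 4 = 0 := by nlinarith [sq_nonneg z, sq_nonneg (y ^ 2)]
      exact pow_eq_zero_iff (by norm_num) |>.mp hy4
    | succ N IH =>
      intro x y z hxN h
      -- Trivial cases
      by_cases hy : y = 0
      · exact Or.inl hy
      by_cases hz : z = 0
      · exact Or.inr hz
      exfalso
      have hxne : x ≠ 0 := by
        intro h0; subst h0
        have : y ^ 4 = 0 := by nlinarith [sq_nonneg z, sq_nonneg (y ^ 2)]
        exact hy (pow_eq_zero_iff (by norm_num) |>.mp this)
      -- reduce to the coprime case
      by_cases hg : Int.gcd x y = 1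
      case neg =>
        -- gcd ≥ 2 : divide out
        have hgne : Int.gcd x y ≠ 0 := by
          intro h0
          exact hxne (Int.natAbs_eq_zero.mp (Nat.eq_zero_of_gcd_eq_zero_left h0))
        have hg2 : 2 ≤ Int.gcd x y := by omega
        obtain ⟨x1, hx1⟩ : (Int.gcd x y : ℤ) ∣ x := Int.gcd_dvd_left x y
        obtain ⟨y1, hy1⟩ : (Int.gcd x y : ℤ) ∣ y := Int.gcd_dvd_right x y
        have hgZ : (2 : ℤ) ≤ (Int.gcd x y : ℤ) := by exact_mod_cast hg2
        have hgnat : x.natAbs = (Int.gcd x y) * x1.natAbs := by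
          conv_lhs => rw [hx1]
          rw [Int.natAbs_mul, Int.natAbs_natCast]
        generalize hgg : (Int.gcd x y : ℤ) = g at hx1 hy1 hgZ
        have hgpos : (0 : ℤ) < g := by linarith
        have hzdvd : (g ^ 2) ^ 2 ∣ z ^ 2 := by
          refine ⟨x1 ^ 4 - y1 ^ 4, ?_⟩
          rw [hx1, hy1] at h
          linear_combination -h
        have hz2 : g ^ 2 ∣ z :=
          (Int.pow_dvd_pow_iff two_ne_zero).mp hzdvd
        obtain ⟨z1, hz1⟩ := hz2
        have heq1 : x1 ^ 4 = y1 ^ 4 + z1 ^ 2 := by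
          have H : g ^ 4 * x1 ^ 4 = g ^ 4 * (y1 ^ 4 + z1 ^ 2) := by
            rw [hx1, hy1, hz1] at h
            linear_combination h
          exact mul_left_cancel₀ (by positivity) H
        have hx1ne : x1 ≠ 0 := by
          intro h0; rw [h0, mul_zero] at hx1; exact hxne hx1
        have hsmall : x1.natAbs ≤ N := by
          have h2 : 1 ≤ x1.natAbs := Int.natAbs_pos.mpr hx1ne
          have h3 : 2 * x1.natAbs ≤ x.natAbs := by
            rw [hgnat]; exact Nat.mul_le_mul_right _ hg2
          omega
        rcases IH x1 y1 z1 hsmall heq1 with h0 | h0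
        · exact hy (by rw [hy1, h0, mul_zero])
        · exact hz (by rw [hz1, h0, mul_zero])
      case pos =>
        -- coprime case; replace everything with absolute values
        set X := |x| with hXdef
        set Y := |y| with hYdef
        set Z := |z| with hZdef
        have hXpos : 0 < X := abs_pos.mpr hxne
        have hYpos : 0 < Y := abs_pos.mpr hy
        have hZpos : 0 < Z := abs_pos.mpr hz
        have hE : X ^ 4 = Y ^ 4 + Z ^ 2 := by
          have e1 : X ^ 4 = x ^ 4 := by
            rw [hXdef, ← abs_pow]; exact abs_of_nonneg (by positivity)
          have e2 : Y ^ 4 = y ^ 4 := by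
            rw [hYdef, ← abs_pow]; exact abs_of_nonneg (by positivity)
          have e3 : Z ^ 2 = z ^ 2 := by
            rw [hZdef, ← abs_pow]; exact abs_of_nonneg (by positivity)
          rw [e1, e2, e3]; exact h
        have hgXY : Int.gcd X Y = 1 := by
          have : Int.gcd X Y = Int.gcd x y := by
            simp [Int.gcd, hXdef, hYdef, Int.natAbs_abs]
          rw [this, hg]
        have hXx : X.natAbs = x.natAbs := by rw [hXdef, Int.natAbs_abs]
        have IH' : ∀ m y z : ℤ, m.natAbs < X.natAbs → m ^ 4 = y ^ 4 + z ^ 2 →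
            y = 0 ∨ z = 0 := by
          intro m y' z' hlt heq'
          exact IH m y' z' (by omega) heq'
        clear_value X Y Z
        clear hXdef hYdef hZdef h hy hz hxne hg hxN
        -- X is odd
        have hXodd : X % 2 = 1 := by
          rcases Int.emod_two_eq_zero_or_one X with hX2 | hX2
          · exfalso
            have hY2 : Y % 2 = 1 := by
              rcases Int.emod_two_eq_zero_or_one Y with hY2 | hY2
              · exfalso
                have : (2 : ℤ) ∣ Int.gcd X Y :=
                  Int.dvd_coe_gcd (Int.dvd_of_emod_eq_zero hX2) (Int.dvd_of_emod_eq_zero hY2)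
                rw [hgXY] at this
                norm_num at this
              · exact hY2
            obtain ⟨a, ha⟩ := Int.dvd_of_emod_eq_zero hX2
            have hb : Y = 2 * (Y / 2) + 1 := by
              conv_lhs => rw [← Int.mul_ediv_add_emod Y 2]
              rw [hY2]
            have h8 : ((2 * a : ℤ) : ZMod 8) ^ 4 =
                ((2 * (Y / 2) + 1 : ℤ) : ZMod 8) ^ 4 + ((Z : ℤ) : ZMod 8) ^ 2 := by
              rw [← ha, ← hb]
              exact_mod_cast congrArg (fun t : ℤ => (t : ZMod 8)) hE
            push_cast at h8
            revert h8
            generalize ((a : ℤ) : ZMod 8) = u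
            generalize ((Y / 2 : ℤ) : ZMod 8) = v
            generalize ((Z : ℤ) : ZMod 8) = w
            revert u v w
            decide
          · exact hX2
        have hcoXY : IsCoprime X Y := Int.isCoprime_iff_gcd_eq_one.mpr hgXY
        have hcoYZ : IsCoprime Y Z := by
          have hz2 : Z ^ 2 = X ^ 4 + Y ^ 4 * (-1) := by linear_combination -hE
          have h4 : IsCoprime (Y ^ 4) (Z ^ 2) := by
            rw [hz2]
            exact (hcoXY.symm.pow).add_mul_left_right (-1)
          rwa [IsCoprime.pow_left_iff (by norm_num : 0 < 4),
            IsCoprime.pow_right_iff (by norm_num : 0 < 2)] at h4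
        rcases Int.emod_two_eq_zero_or_one Y with hY2 | hY2
        · -- Y even, Z odd
          have hZodd : Z % 2 = 1 := by
            rcases Int.emod_two_eq_zero_or_one Z with hZ2 | hZ2
            · exfalso
              obtain ⟨b, hbY⟩ := Int.dvd_of_emod_eq_zero hY2
              obtain ⟨c, hcZ⟩ := Int.dvd_of_emod_eq_zero hZ2
              have h2X : (2 : ℤ) ∣ X ^ 4 := by
                refine ⟨8 * b ^ 4 + 2 * c ^ 2, ?_⟩
                rw [hbY, hcZ] at hE
                linear_combination hE
              have : (2 : ℤ) ∣ X := Int.prime_two.dvd_of_dvd_pow h2X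
              obtain ⟨d, hd⟩ := this
              omega
            · exact hZ2
          have hgZY : Int.gcd Z (Y ^ 2) = 1 :=
            Int.isCoprime_iff_gcd_eq_one.mp (hcoYZ.symm.pow_right)
          have htriple : PythagoreanTriple Z (Y ^ 2) (X ^ 2) := by
            unfold PythagoreanTriple
            linear_combination -hE
          obtain ⟨m, n, h1, h2, h3, hmn, hpar, hm0⟩ :=
            htriple.coprime_classification' hgZY hZodd (by positivity)
          have hmne : m ≠ 0 := by
            intro h0; rw [h0] at h2; simp at h2
            exact hYpos.ne' h2
          have hnne : n ≠ 0 := by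
            intro h0; rw [h0] at h2; simp at h2
            exact hYpos.ne' h2
          have hmpos : 0 < m := lt_of_le_of_ne hm0 (Ne.symm hmne)
          have hnpos : 0 < n := by nlinarith [pow_pos hYpos 2]
          obtain ⟨W, hW⟩ : (2 : ℤ) ∣ Y := Int.dvd_of_emod_eq_zero hY2
          have hWne : W ≠ 0 := by
            intro h0; rw [h0, mul_zero] at hW; exact hYpos.ne' hW
          have hWmn : W ^ 2 * 2 = m * n := by
            rw [hW] at h2
            have H : (2 : ℤ) * (W ^ 2 * 2) = 2 * (m * n) := by linear_combination h2
            exact mul_left_cancel₀ two_ne_zero H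
          rcases hpar with ⟨hm2, hn2⟩ | ⟨hm2, hn2⟩
          · -- m even, n odd
            obtain ⟨r, hr⟩ := Int.dvd_of_emod_eq_zero hm2
            have hrn : r * n = W ^ 2 := by
              rw [hr] at hWmn
              have H : (2 : ℤ) * (r * n) = 2 * W ^ 2 := by linear_combination -hWmn
              exact mul_left_cancel₀ two_ne_zero H
            have hcorn : IsCoprime r n :=
              (Int.isCoprime_iff_gcd_eq_one.mpr hmn).of_isCoprime_of_dvd_left ⟨2, by omega⟩
            obtain ⟨u, hu⟩ := Int.sq_of_isCoprime hcorn hrn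
            have hrpos : 0 < r := by omega
            have hu : r = u ^ 2 := by
              rcases hu with h0 | h0
              · exact h0
              · exfalso; nlinarith [sq_nonneg u]
            obtain ⟨v, hv⟩ := Int.sq_of_isCoprime hcorn.symm
              (by linear_combination hrn : n * r = W ^ 2)
            have hv : n = v ^ 2 := by
              rcases hv with h0 | h0
              · exact h0
              · exfalso; nlinarith [sq_nonneg v]
            have hune : u ≠ 0 := by
              intro h0; rw [h0] at hu; simp at hu; omega
            have hvodd : v % 2 = 1 := by
              rcases Int.emod_two_eq_zero_or_one v with h0 | h0
              · exfalso
                obtain ⟨t, ht⟩ := Int.dvd_of_emod_eq_zero h0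
                rw [hv, ht] at hn2
                have : (2 * t) ^ 2 = 2 * (2 * t ^ 2) := by ring
                rw [this] at hn2
                omega
              · exact h0
            have hgv : Int.gcd (v ^ 2) (2 * u ^ 2) = 1 := by
              rw [← hv, show (2 : ℤ) * u ^ 2 = m by rw [hr, hu], Int.gcd_comm]
              exact hmn
            have heq2 : X ^ 2 = (v ^ 2) ^ 2 + (2 * u ^ 2) ^ 2 := by
              rw [← hv, show (2 : ℤ) * u ^ 2 = m by rw [hr, hu]]
              linear_combination h3
            exact step2 X v u hXpos hune hvodd hgv heq2 IH'
          · -- m odd, n even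
            obtain ⟨s, hs⟩ := Int.dvd_of_emod_eq_zero hn2
            have hms : m * s = W ^ 2 := by
              rw [hs] at hWmn
              have H : (2 : ℤ) * (m * s) = 2 * W ^ 2 := by linear_combination -hWmn
              exact mul_left_cancel₀ two_ne_zero H
            have hcoms : IsCoprime m s :=
              (Int.isCoprime_iff_gcd_eq_one.mpr hmn).symm.of_isCoprime_of_dvd_left ⟨2, by omega⟩
                |>.symm
            obtain ⟨u, hu⟩ := Int.sq_of_isCoprime hcoms hms
            have hu : m = u ^ 2 := by
              rcases hu with h0 | h0
              · exact h0
              · exfalso; nlinarith [sq_nonneg u]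
            obtain ⟨v, hv⟩ := Int.sq_of_isCoprime hcoms.symm
              (by linear_combination hms : s * m = W ^ 2)
            have hspos : 0 < s := by omega
            have hv : s = v ^ 2 := by
              rcases hv with h0 | h0
              · exact h0
              · exfalso; nlinarith [sq_nonneg v]
            have hvne : v ≠ 0 := by
              intro h0; rw [h0] at hv; simp at hv; omega
            have huodd : u % 2 = 1 := by
              rcases Int.emod_two_eq_zero_or_one u with h0 | h0
              · exfalso
                obtain ⟨t, ht⟩ := Int.dvd_of_emod_eq_zero h0
                rw [hu, ht] at hm2
                have : (2 * t) ^ 2 = 2 * (2 * t ^ 2) := by ring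
                rw [this] at hm2
                omega
              · exact h0
            have hgu : Int.gcd (u ^ 2) (2 * v ^ 2) = 1 := by
              rw [← hu, show (2 : ℤ) * v ^ 2 = n by rw [hs, hv]]
              exact hmn
            have heq2 : X ^ 2 = (u ^ 2) ^ 2 + (2 * v ^ 2) ^ 2 := by
              rw [← hu, show (2 : ℤ) * v ^ 2 = n by rw [hs, hv]]
              linear_combination h3
            exact step2 X u v hXpos hvne huodd hgu heq2 IH'
        · -- Y odd
          have hgY2Z : Int.gcd (Y ^ 2) Z = 1 :=
            Int.isCoprime_iff_gcd_eq_one.mp hcoYZ.pow_left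
          have hY2odd : (Y ^ 2) % 2 = 1 :=
            Int.odd_iff.mp ((Int.odd_iff.mpr hY2).pow)
          have htriple : PythagoreanTriple (Y ^ 2) Z (X ^ 2) := by
            unfold PythagoreanTriple
            linear_combination -hE
          obtain ⟨m, n, h1, h2, h3, hmn, hpar, hm0⟩ :=
            htriple.coprime_classification' hgY2Z hY2odd (by positivity)
          have hnne : n ≠ 0 := by
            intro h0; rw [h0, mul_zero] at h2; exact hZpos.ne' h2
          have heq2 : m ^ 4 = n ^ 4 + (X * Y) ^ 2 := by
            linear_combination (-(m ^ 2 + n ^ 2)) * h1 - Y ^ 2 * h3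
          have hsmall : m.natAbs < X.natAbs := by
            have hc1 : (m.natAbs : ℤ) = |m| := (Int.abs_eq_natAbs m).symm
            have hc2 : (X.natAbs : ℤ) = X := Int.natAbs_of_nonneg hXpos.le
            have hmX : |m| < X := by
              have hsq : |m| ^ 2 < X ^ 2 := by
                rw [sq_abs]
                nlinarith [sq_pos_of_ne_zero hnne]
              nlinarith [abs_nonneg m]
            have : (m.natAbs : ℤ) < (X.natAbs : ℤ) := by rw [hc1, hc2]; exact hmX
            exact_mod_cast this
          rcases IH' m n (X * Y) hsmall heq2 with h0 | h0
          · exact hnne h0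
          · exact (mul_ne_zero hXpos.ne' hYpos.ne') h0
  intro x y z h
  exact main x.natAbs x y z le_rfl h

theorem stmt_8 :
    ¬ ∃ a b c : ℚ, 0 < a ∧ 0 < b ∧ 0 < c ∧ a ^ 2 + b ^ 2 = c ^ 2 ∧ a * b / 2 = 1 := by
  rintro ⟨a, b, c, ha, hb, hc, hpyth, harea⟩
  have hab : a * b = 2 := by linarith [harea]
  set d : ℚ := a ^ 2 - b ^ 2 with hd
  have hkey : c ^ 4 = d ^ 2 + 16 := by
    have h1 : a ^ 2 + b ^ 2 = c ^ 2 := hpyth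
    nlinarith [h1, hab]
  -- clear denominators
  set qc : ℤ := (c.den : ℤ) with hqc
  set qd : ℤ := (d.den : ℤ) with hqd
  have hqcpos : (0 : ℤ) < qc := by rw [hqc]; exact_mod_cast c.pos
  have hqdpos : (0 : ℤ) < qd := by rw [hqd]; exact_mod_cast d.pos
  set q : ℤ := qc * qd with hq
  have hqpos : (0 : ℤ) < q := mul_pos hqcpos hqdpos
  have hcq : (c * (q : ℚ)) = ((c.num * qd : ℤ) : ℚ) := by
    push_cast [hq, hqc, hqd]
    rw [← mul_assoc]
    rw [Rat.mul_den_eq_num]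
  have hdq : (d * ((q : ℚ)) ^ 2) = ((d.num * (qd * qc ^ 2) : ℤ) : ℚ) := by
    push_cast [hq, hqc, hqd]
    have : d * ((c.den : ℚ) * (d.den : ℚ)) ^ 2
        = (d * (d.den : ℚ)) * ((d.den : ℚ) * (c.den : ℚ) ^ 2) := by ring
    rw [this, Rat.mul_den_eq_num]
  set X : ℤ := c.num * qd with hX
  set Z : ℤ := d.num * (qd * qc ^ 2) with hZ
  set Y : ℤ := 2 * q with hY
  have hint : X ^ 4 = Y ^ 4 + Z ^ 2 := by
    have hQ : ((X : ℚ)) ^ 4 = ((Y : ℚ)) ^ 4 + ((Z : ℚ)) ^ 2 := by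
      rw [← hcq, ← hdq]
      push_cast [hY]
      have : ((q : ℚ)) ^ 4 * (c ^ 4) = ((q : ℚ)) ^ 4 * (d ^ 2 + 16) := by
        rw [hkey]
      nlinarith [this]
    exact_mod_cast hQ
  rcases quartic_diff X Y Z hint with h0 | h0
  · rw [hY] at h0
    omega
  · -- d = 0, so a = b and a ^ 2 = 2, contradicting irrationality of √2
    have hdnum : d.num = 0 := by
      rcases mul_eq_zero.mp h0 with h1 | h1
      · exact h1
      · exfalso
        have hpos : (0 : ℤ) < qd * qc ^ 2 := by positivity
        omega
    have hd0 : d = 0 := Rat.zero_iff_num_zero.mpr hdnum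
    have hab' : a = b := by
      have h1 : (a - b) * (a + b) = 0 := by
        have : a ^ 2 - b ^ 2 = 0 := by rw [← hd]; exact hd0
        linear_combination this
      rcases mul_eq_zero.mp h1 with h2 | h2
      · linarith
      · linarith
    have ha2 : a ^ 2 = 2 := by rw [hab'] at hab ⊢; nlinarith [hab]
    have : Real.sqrt 2 = (a : ℝ) := by
      have h2 : ((a : ℝ)) ^ 2 = 2 := by exact_mod_cast ha2
      rw [← h2, Real.sqrt_sq (by exact_mod_cast ha.le : (0:ℝ) ≤ (a:ℝ))]
    exact irrational_sqrt_two ⟨a, this.symm⟩
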